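/- arXiv:2408.06624 — 4 statements merged into one kernel-verified Lean document; each statement's English description precedes it below -/
import Mathlib

section
/- For every real x, lim_{m→∞} ₀F₁(m/2; (m/2)x) = exp(x), where the limit is taken along positive integers m → ∞. -/
open Real Finset Filter Topology

/-- The confluent hypergeometric limit function
`₀F₁(a; b) = Σ_{n=0}^∞ bⁿ / ((a)_n n!)`, where `(a)_n = a (a+1) ⋯ (a+n-1)`
is the rising factorial. -/
noncomputable def hyp0F1 (a b : ℝ) : ℝ :=
  ∑' n : ℕ, b ^ n / ((∏ k ∈ Finset.range n, (a + k)) * (Nat.factorial n))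

lemma aux_key (x : ℝ) (n : ℕ) :
    Filter.Tendsto (fun a : ℝ => (a * x) ^ n /
      ((∏ k ∈ Finset.range n, (a + k)) * (Nat.factorial n)))
      Filter.atTop (nhds (x ^ n / Nat.factorial n)) := by
  have h1 : ∀ k : ℕ, Tendsto (fun a : ℝ => a / (a + k)) atTop (𝓝 1) := by
    intro k
    have h2 : Tendsto (fun a : ℝ => (k : ℝ) / (a + k)) atTop (𝓝 0) :=
      Tendsto.div_atTop tendsto_const_nhds
        (tendsto_atTop_add_const_right _ _ tendsto_id)
    have h3 := (tendsto_const_nhds (x := (1 : ℝ)) (f := atTop)).sub h2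
    rw [sub_zero] at h3
    apply h3.congr'
    filter_upwards [eventually_gt_atTop 0] with a ha
    have hak : a + (k : ℝ) ≠ 0 := by positivity
    field_simp
    ring
  have hprod : Tendsto (fun a : ℝ => ∏ k ∈ Finset.range n, (a / (a + k)))
      atTop (𝓝 1) := by
    have := tendsto_finset_prod (Finset.range n)
      (fun k (_ : k ∈ Finset.range n) => h1 k)
    simpa using this
  have h4 := hprod.const_mul (x ^ n / (Nat.factorial n : ℝ))
  rw [mul_one] at h4
  apply h4.congr'
  filter_upwards [eventually_gt_atTop 0] with a ha
  have hne : ∀ k ∈ Finset.range n, a + (k : ℝ) ≠ 0 := fun k _ => by positivity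
  have hpne : (∏ k ∈ Finset.range n, (a + (k : ℝ))) ≠ 0 := Finset.prod_ne_zero_iff.2 hne
  have hfact : (Nat.factorial n : ℝ) ≠ 0 := by positivity
  rw [Finset.prod_div_distrib, Finset.prod_const, Finset.card_range]
  field_simp
  ring

/-- for every real `x`, `₀F₁(m/2; (m/2) x) → exp x` as the positive
integer `m → ∞`. -/
theorem stmt_7 (x : ℝ) :
    Filter.Tendsto (fun m : ℕ => hyp0F1 ((m : ℝ) / 2) (((m : ℝ) / 2) * x))
      Filter.atTop (nhds (Real.exp x)) := by
  have hexp : Real.exp x = ∑' n : ℕ, x ^ n / Nat.factorial n := by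
    rw [Real.exp_eq_exp_ℝ, NormedSpace.exp_eq_tsum_div]
  rw [hexp]
  unfold hyp0F1
  apply tendsto_tsum_of_dominated_convergence
    (bound := fun n => |x| ^ n / Nat.factorial n)
    (Real.summable_pow_div_factorial |x|)
  · intro n
    have ha : Tendsto (fun m : ℕ => (m : ℝ) / 2) atTop atTop :=
      tendsto_natCast_atTop_atTop.atTop_div_const two_pos
    exact (aux_key x n).comp ha
  · filter_upwards [eventually_ge_atTop 2] with m hm n
    have ha1 : (1 : ℝ) ≤ (m : ℝ) / 2 := by
      have : (2 : ℝ) ≤ (m : ℝ) := by exact_mod_cast hm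
      linarith
    set a : ℝ := (m : ℝ) / 2 with hadef
    have ha0 : (0 : ℝ) < a := lt_of_lt_of_le one_pos ha1
    have hppos : (0 : ℝ) < ∏ k ∈ Finset.range n, (a + (k : ℝ)) :=
      Finset.prod_pos fun k _ => by positivity
    have hfpos : (0 : ℝ) < (Nat.factorial n : ℝ) := by positivity
    rw [Real.norm_eq_abs, abs_div, abs_pow, abs_mul, abs_of_pos ha0, mul_pow,
      abs_of_pos (mul_pos hppos hfpos)]
    have hle : a ^ n ≤ ∏ k ∈ Finset.range n, (a + (k : ℝ)) := by
      calc a ^ n = ∏ _k ∈ Finset.range n, a := by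
            rw [Finset.prod_const, Finset.card_range]
        _ ≤ _ := Finset.prod_le_prod (fun k _ => le_of_lt ha0)
            (fun k _ => le_add_of_nonneg_right (Nat.cast_nonneg k))
    calc a ^ n * |x| ^ n / ((∏ k ∈ Finset.range n, (a + (k : ℝ))) * Nat.factorial n)
        ≤ (∏ k ∈ Finset.range n, (a + (k : ℝ))) * |x| ^ n /
          ((∏ k ∈ Finset.range n, (a + (k : ℝ))) * Nat.factorial n) := by
          gcongr
      _ = |x| ^ n / Nat.factorial n :=
          mul_div_mul_left _ _ (ne_of_gt hppos)
end

section
/- Let m be a positive integer, σ² > 0, and let S be a nonnegative random variable such that m S / σ² has the chi-squared distribution with m degrees of freedom. Then for every real constant a, E[ ₀F₁(m/2; (m/2) a S) ] = exp(a σ²). -/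
open Real Finset MeasureTheory ProbabilityTheory
open Set

lemma my_Gamma_prod {k : ℝ} (hk : 0 < k) (n : ℕ) :
    Real.Gamma (k + n) = Real.Gamma k * ∏ j ∈ Finset.range n, (k + j) := by
  induction n with
  | zero => simp
  | succ n ih =>
    have h1 : k + ((n : ℕ) + 1 : ℕ) = (k + n) + 1 := by push_cast; ring
    have h2 : k + (n : ℝ) ≠ 0 := by positivity
    rw [h1, Real.Gamma_add_one h2, ih, Finset.prod_range_succ]
    ring

lemma my_gamma_ae_nonneg {k : ℝ} : ∀ᵐ x ∂(gammaMeasure k (1/2)), 0 ≤ x := by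
  rw [ae_iff]
  have hs : {x : ℝ | ¬ 0 ≤ x} = Set.Iio 0 := by ext x; simp [not_le]
  rw [hs, gammaMeasure, withDensity_apply _ measurableSet_Iio]
  exact lintegral_gammaPDF_of_nonpos le_rfl

lemma my_gamma_moment_lintegral {k : ℝ} (hk : 0 < k) (n : ℕ) :
    ∫⁻ x, ENNReal.ofReal (x ^ n) ∂(gammaMeasure k (1/2)) =
      ENNReal.ofReal (Real.Gamma (k + n) / Real.Gamma k * 2 ^ n) := by
  have hr : (0:ℝ) < 1/2 := by norm_num
  have hkn : (0:ℝ) < k + n := by positivity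
  have hmeas : Measurable fun x : ℝ => ENNReal.ofReal (x ^ n) :=
    (measurable_id.pow_const n).ennreal_ofReal
  have hpdfm : Measurable (gammaPDF k (1/2)) :=
    (measurable_gammaPDFReal k (1/2)).ennreal_ofReal
  rw [gammaMeasure, lintegral_withDensity_eq_lintegral_mul _ hpdfm hmeas]
  have hsplit := (lintegral_add_compl (μ := volume)
    (fun x => (gammaPDF k (1/2) * fun x : ℝ => ENNReal.ofReal (x ^ n)) x)
    (measurableSet_Ici (a := (0:ℝ)))).symm
  rw [hsplit, compl_Ici]
  have h2 : ∫⁻ x in Set.Iio (0:ℝ),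
      (gammaPDF k (1/2) * fun x : ℝ => ENNReal.ofReal (x ^ n)) x = 0 := by
    rw [setLIntegral_congr_fun (g := fun _ => (0:ENNReal)) measurableSet_Iio
      (fun x (hx : x < 0) => by
        simp [Pi.mul_apply, gammaPDF_of_neg hx]), lintegral_zero]
  have hptIci : ∀ x ∈ Set.Ici (0:ℝ),
      (gammaPDF k (1/2) * fun x : ℝ => ENNReal.ofReal (x ^ n)) x =
        ENNReal.ofReal (gammaPDFReal k (1/2) x * x ^ n) := by
    intro x hx
    rw [Pi.mul_apply]
    show ENNReal.ofReal (gammaPDFReal k (1/2) x) * ENNReal.ofReal (x ^ n) = _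
    rw [← ENNReal.ofReal_mul (gammaPDFReal_nonneg hk hr x)]
  have hpt : ∀ x ∈ Set.Ioi (0:ℝ), gammaPDFReal k (1/2) x * x ^ n =
      (1/2:ℝ) ^ k / Real.Gamma k * (x ^ (k + n - 1) * Real.exp (-(1/2 * x))) := by
    intro x hx
    have hx0 : (0:ℝ) < x := hx
    have hxp : x ^ (k + (n:ℝ) - 1) = x ^ (k - 1) * x ^ n := by
      rw [← Real.rpow_natCast x n, ← Real.rpow_add hx0]
      ring_nf
    rw [gammaPDFReal, if_pos hx0.le, hxp]
    ring
  have hint : IntegrableOn (fun x => gammaPDFReal k (1/2) x * x ^ n) (Set.Ici 0) := by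
    rw [integrableOn_Ici_iff_integrableOn_Ioi]
    have hbase := (integrableOn_rpow_mul_exp_neg_mul_rpow
      (s := k + n - 1) (p := 1) (b := 1/2) (by linarith) zero_lt_one hr).const_mul
      ((1/2:ℝ) ^ k / Real.Gamma k)
    apply IntegrableOn.congr_fun hbase ?_ measurableSet_Ioi
    intro x hx
    simp only []
    rw [hpt x hx, Real.rpow_one]
    ring_nf
  have hnn : 0 ≤ᵐ[volume.restrict (Set.Ici (0:ℝ))]
      fun x => gammaPDFReal k (1/2) x * x ^ n := by
    refine (ae_restrict_iff' measurableSet_Ici).mpr (ae_of_all _ fun x (hx : 0 ≤ x) =>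
      mul_nonneg (gammaPDFReal_nonneg hk hr x) (pow_nonneg hx n))
  rw [setLIntegral_congr_fun measurableSet_Ici hptIci, h2, add_zero,
    ← ofReal_integral_eq_lintegral_ofReal hint hnn]
  congr 1
  rw [integral_Ici_eq_integral_Ioi,
    setIntegral_congr_fun measurableSet_Ioi hpt, integral_const_mul,
    integral_rpow_mul_exp_neg_mul_Ioi hkn hr]
  have hG : Real.Gamma k ≠ 0 := (Real.Gamma_pos_of_pos hk).ne'
  have h12 : ((1:ℝ) / (1/2)) = 2 := by norm_num
  rw [h12]
  have ha : (1/2:ℝ) ^ k = ((2:ℝ) ^ k)⁻¹ := by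
    rw [one_div, Real.inv_rpow (by norm_num : (0:ℝ) ≤ 2)]
  have hb : (2:ℝ) ^ (k + (n:ℝ)) = (2:ℝ) ^ k * (2:ℝ) ^ (n:ℝ) := Real.rpow_add two_pos _ _
  have hc : (2:ℝ) ^ ((n:ℝ)) = (2:ℝ) ^ n := Real.rpow_natCast 2 n
  have h2k : (0:ℝ) < (2:ℝ) ^ k := Real.rpow_pos_of_pos two_pos k
  rw [ha, hb, hc]
  field_simp

lemma my_gamma_moment_integral {k : ℝ} (hk : 0 < k) (n : ℕ) :
    ∫ x, x ^ n ∂(gammaMeasure k (1/2)) = Real.Gamma (k + n) / Real.Gamma k * 2 ^ n := by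
  have hr : (0:ℝ) < 1/2 := by norm_num
  rw [integral_eq_lintegral_of_nonneg_ae
    (my_gamma_ae_nonneg.mono fun x hx => pow_nonneg hx n)
    (measurable_id.pow_const n).aestronglyMeasurable,
    my_gamma_moment_lintegral hk n, ENNReal.toReal_ofReal]
  have hG : 0 < Real.Gamma k := Real.Gamma_pos_of_pos hk
  have hGn : 0 < Real.Gamma (k + n) := Real.Gamma_pos_of_pos (by positivity)
  positivity


/-- if `m S / σ² ~ χ²(m)` (the Gamma distribution with shape `m/2` and
rate `1/2`), then `E[₀F₁(m/2; (m/2) a S)] = exp (a σ²)` for every real `a`. -/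
theorem stmt_8 {Ω : Type*} [MeasurableSpace Ω] (μ : Measure Ω) [IsProbabilityMeasure μ]
    (m : ℕ) (hm : 0 < m) (σ2 : ℝ) (hσ2 : 0 < σ2)
    (S : Ω → ℝ) (hS : Measurable S) (hS0 : ∀ ω, 0 ≤ S ω)
    (hchi : Measure.map (fun ω => (m : ℝ) * S ω / σ2) μ =
      gammaMeasure ((m : ℝ) / 2) (1 / 2)) :
    ∀ a : ℝ, ∫ ω, hyp0F1 ((m : ℝ) / 2) (((m : ℝ) / 2) * (a * S ω)) ∂μ =
      Real.exp (a * σ2) := by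
  intro a
  have hσ2' : σ2 ≠ 0 := hσ2.ne'
  set k : ℝ := (m : ℝ) / 2 with hkdef
  have hk : 0 < k := by
    have : (0:ℝ) < m := by exact_mod_cast hm
    positivity
  set c : ℝ := a * σ2 / 2 with hcdef
  set T : Ω → ℝ := fun ω => (m : ℝ) * S ω / σ2 with hTdef
  have hTm : Measurable T := (hS.const_mul _).div_const _
  set μG := gammaMeasure k (1/2) with hμG
  set P : ℕ → ℝ := fun n => ∏ j ∈ Finset.range n, (k + j) with hPdef
  have hP : ∀ n, 0 < P n := fun n => Finset.prod_pos fun j _ => by positivity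
  have hD : ∀ n : ℕ, (0:ℝ) < P n * n.factorial := fun n =>
    mul_pos (hP n) (by exact_mod_cast n.factorial_pos)
  -- the functions
  set f : ℕ → ℝ → ℝ := fun n x => (c * x) ^ n / (P n * n.factorial) with hfdef
  have hfm : ∀ n, Measurable (f n) := fun n =>
    ((measurable_id.const_mul c).pow_const n).div_const _
  -- rewrite the integrand as a tsum
  have hpt : ∀ ω, hyp0F1 k (k * (a * S ω)) = ∑' n, f n (T ω) := by
    intro ω
    have harg : k * (a * S ω) = c * T ω := by
      rw [hkdef, hcdef, hTdef]
      field_simp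
    rw [hyp0F1, harg]
  -- moments
  have hmoment : ∀ n : ℕ, ∫ x, x ^ n ∂μG = P n * 2 ^ n := by
    intro n
    rw [hμG, my_gamma_moment_integral hk n, my_Gamma_prod hk n]
    show (Real.Gamma k * P n) / Real.Gamma k * 2 ^ n = P n * 2 ^ n
    rw [mul_comm (Real.Gamma k) (P n), mul_div_assoc,
      div_self (Real.Gamma_pos_of_pos hk).ne', mul_one]
  have hlmoment : ∀ n : ℕ, ∫⁻ x, ENNReal.ofReal (x ^ n) ∂μG =
      ENNReal.ofReal (P n * 2 ^ n) := by
    intro n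
    rw [hμG, my_gamma_moment_lintegral hk n, my_Gamma_prod hk n]
    show ENNReal.ofReal ((Real.Gamma k * P n) / Real.Gamma k * 2 ^ n) =
      ENNReal.ofReal (P n * 2 ^ n)
    rw [mul_comm (Real.Gamma k) (P n), mul_div_assoc,
      div_self (Real.Gamma_pos_of_pos hk).ne', mul_one]
  -- norm lintegral of each term
  have hnorm : ∀ n : ℕ, ∫⁻ x, ‖f n x‖₊ ∂μG =
      ENNReal.ofReal ((2 * |c|) ^ n / n.factorial) := by
    intro n
    have heq : ∀ᵐ x ∂μG, (‖f n x‖₊ : ENNReal) =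
        ENNReal.ofReal (|c| ^ n / (P n * n.factorial)) * ENNReal.ofReal (x ^ n) := by
      refine my_gamma_ae_nonneg.mono fun x hx => ?_
      rw [← enorm_eq_nnnorm, ← ofReal_norm,
        ← ENNReal.ofReal_mul (by positivity)]
      congr 1
      rw [hfdef]
      simp only [Real.norm_eq_abs, abs_div, abs_pow, abs_mul,
        abs_of_nonneg hx, abs_of_pos (hD n)]
      ring
    rw [lintegral_congr_ae heq,
      lintegral_const_mul (f := fun x : ℝ => ENNReal.ofReal (x ^ n)) _
        ((measurable_id.pow_const n).ennreal_ofReal),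
      hlmoment n, ← ENNReal.ofReal_mul (by positivity)]
    congr 1
    have hfac : ((n.factorial : ℝ)) ≠ 0 := by exact_mod_cast n.factorial_pos.ne'
    rw [mul_pow 2 |c| n]
    have hPn : P n ≠ 0 := (hP n).ne'
    field_simp
  -- bound for integral_tsum
  have hbound : (∑' n : ℕ, ∫⁻ ω, ‖f n (T ω)‖₊ ∂μ) ≠ ⊤ := by
    have hmap : ∀ n : ℕ, ∫⁻ ω, ‖f n (T ω)‖₊ ∂μ = ∫⁻ x, ‖f n x‖₊ ∂μG := by
      intro n
      rw [← hchi, lintegral_map (hfm n).nnnorm.coe_nnreal_ennreal hTm]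
    simp_rw [hmap, hnorm]
    rw [← ENNReal.ofReal_tsum_of_nonneg (fun n => by positivity)
      (Real.summable_pow_div_factorial (2 * |c|))]
    exact ENNReal.ofReal_ne_top
  calc ∫ ω, hyp0F1 k (k * (a * S ω)) ∂μ
      = ∫ ω, ∑' n, f n (T ω) ∂μ := by
        exact integral_congr_ae (ae_of_all _ hpt)
    _ = ∑' n, ∫ ω, f n (T ω) ∂μ := by
        refine integral_tsum (fun n => ((hfm n).comp hTm).aestronglyMeasurable) hbound
    _ = ∑' n, (2 * c) ^ n / n.factorial := by
        congr 1
        funext n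
        have h1 : ∫ ω, f n (T ω) ∂μ = ∫ x, f n x ∂μG := by
          rw [← hchi, integral_map hTm.aemeasurable (hfm n).aestronglyMeasurable]
        have h2 : (fun x => f n x) = fun x => (c ^ n / (P n * n.factorial)) * x ^ n := by
          funext x
          rw [hfdef]
          simp only [mul_pow]
          ring
        rw [h1, h2, integral_const_mul, hmoment n, mul_pow 2 c n]
        have hfac : ((n.factorial : ℝ)) ≠ 0 := by exact_mod_cast n.factorial_pos.ne'
        have hPn : P n ≠ 0 := (hP n).ne'
        field_simp
    _ = Real.exp (a * σ2) := by
        have h2c : 2 * c = a * σ2 := by rw [hcdef]; ring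
        rw [← h2c, Real.exp_eq_exp_ℝ, NormedSpace.exp_eq_tsum_div]
end

section
/- Let m be a positive integer, τ ∈ ℝ, σ² > 0. Let T and S be independent random variables such that T has the normal distribution N(τ, σ²) and m S / σ² has the chi-squared distribution with m degrees of freedom. Then E[ exp(T) · ₀F₁(m/2; −(m/2)(S/2)) ] = exp(τ). -/
open Real Finset MeasureTheory ProbabilityTheory Filter
open scoped ENNReal NNReal

lemma gamma_prod_aux {a : ℝ} (ha : 0 < a) (n : ℕ) :
    Real.Gamma (a + n) = Real.Gamma a * ∏ k ∈ Finset.range n, (a + k) := by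
  induction n with
  | zero => simp
  | succ n ih =>
    have h : a + ((n+1 : ℕ) : ℝ) = (a + n) + 1 := by push_cast; ring
    have hpos : (0:ℝ) < a + n := by positivity
    rw [h, Real.Gamma_add_one hpos.ne', ih, Finset.prod_range_succ]; ring

lemma gammaPDFReal_mul_pow_eq {a r : ℝ} (n : ℕ) {x : ℝ} (hx0 : 0 < x) :
    gammaPDFReal a r x * x ^ n =
      r ^ a / Real.Gamma a * (x ^ (a + n - 1) * Real.exp (-(r * x))) := by
  simp only [gammaPDFReal, if_pos hx0.le]
  rw [show a + (n:ℝ) - 1 = (a - 1) + n by ring, Real.rpow_add hx0, Real.rpow_natCast]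
  ring

lemma integrableOn_gammaPDF_mul_pow {a r : ℝ} (ha : 0 < a) (hr : 0 < r) (n : ℕ) :
    IntegrableOn (fun x => gammaPDFReal a r x * x ^ n) (Set.Ioi 0) := by
  have h := (integrableOn_rpow_mul_exp_neg_mul_rpow (p := 1) (s := a + n - 1) (b := r)
    (by have : (0:ℝ) ≤ n := Nat.cast_nonneg n; linarith) zero_lt_one hr)
  have h2 : IntegrableOn
      (fun x : ℝ => r ^ a / Real.Gamma a * (x ^ (a + n - 1) * Real.exp (-(r * x))))
      (Set.Ioi 0) := by
    refine (h.congr_fun ?_ measurableSet_Ioi).const_mul _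
    intro x hx
    simp [Real.rpow_one, neg_mul]
  exact h2.congr_fun (fun x hx => (gammaPDFReal_mul_pow_eq n hx).symm) measurableSet_Ioi

lemma integral_gammaPDF_mul_pow {a r : ℝ} (ha : 0 < a) (hr : 0 < r) (n : ℕ) :
    ∫ x in Set.Ioi 0, gammaPDFReal a r x * x ^ n =
      (∏ k ∈ Finset.range n, (a + k)) / r ^ n := by
  have han : (0:ℝ) < a + n := by positivity
  rw [setIntegral_congr_fun measurableSet_Ioi
      (fun x hx => gammaPDFReal_mul_pow_eq n hx), integral_const_mul,
    Real.integral_rpow_mul_exp_neg_mul_Ioi han hr, gamma_prod_aux ha n]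
  have hGa : Real.Gamma a ≠ 0 := (Real.Gamma_pos_of_pos ha).ne'
  have h1r : (0:ℝ) < 1 / r := by positivity
  rw [Real.rpow_add h1r, Real.rpow_natCast]
  have hra : r ^ a * (1/r) ^ a = 1 := by
    rw [← Real.mul_rpow hr.le h1r.le, mul_one_div_cancel hr.ne', Real.one_rpow]
  set P := ∏ k ∈ Finset.range n, (a + (k:ℝ))
  calc r ^ a / Real.Gamma a * ((1/r) ^ a * (1/r) ^ n * (Real.Gamma a * P))
      = (r ^ a * (1/r) ^ a) * (Real.Gamma a / Real.Gamma a) * (P * (1/r) ^ n) := by ring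
    _ = P * (1/r) ^ n := by rw [hra, div_self hGa]; ring
    _ = P / r ^ n := by rw [div_pow, one_pow, mul_one_div]

lemma gammaMeasure_Iio_zero (a r : ℝ) : gammaMeasure a r (Set.Iio 0) = 0 := by
  rw [gammaMeasure, withDensity_apply _ measurableSet_Iio]
  exact lintegral_gammaPDF_of_nonpos le_rfl

lemma ae_nonneg_gammaMeasure (a r : ℝ) : ∀ᵐ x ∂(gammaMeasure a r), 0 ≤ x := by
  rw [ae_iff]
  have h : {x : ℝ | ¬ 0 ≤ x} = Set.Iio 0 := by ext x; simp
  rw [h]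
  exact gammaMeasure_Iio_zero a r

lemma lintegral_pow_gammaMeasure {a r : ℝ} (ha : 0 < a) (hr : 0 < r) (n : ℕ) :
    ∫⁻ x, ENNReal.ofReal (x ^ n) ∂(gammaMeasure a r)
      = ENNReal.ofReal ((∏ k ∈ Finset.range n, (a + k)) / r ^ n) := by
  rw [gammaMeasure, lintegral_withDensity_eq_lintegral_mul _ (show Measurable (gammaPDF a r) from (measurable_gammaPDFReal a r).ennreal_ofReal)
    (by fun_prop : Measurable fun x : ℝ => ENNReal.ofReal (x ^ n))]
  rw [← lintegral_add_compl (μ := volume) _ measurableSet_Iic, Set.compl_Iic]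
  have h0 : ∫⁻ x in Set.Iic 0, (gammaPDF a r * fun x => ENNReal.ofReal (x ^ n)) x = 0 := by
    rw [setLIntegral_congr (μ := volume) Iio_ae_eq_Iic.symm]
    rw [setLIntegral_congr_fun_ae (g := fun _ => (0:ℝ≥0∞)) measurableSet_Iio
      (ae_of_all _ (fun x (hx : x < 0) => by simp [gammaPDF_of_neg hx])), lintegral_zero]
  rw [h0, zero_add]
  have heq : ∀ x ∈ Set.Ioi (0:ℝ), (gammaPDF a r * fun x => ENNReal.ofReal (x ^ n)) x
      = ENNReal.ofReal (gammaPDFReal a r x * x ^ n) := by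
    intro x hx
    simp only [Pi.mul_apply, gammaPDF]
    rw [ENNReal.ofReal_mul (gammaPDFReal_nonneg ha hr x)]
  rw [setLIntegral_congr_fun_ae measurableSet_Ioi (ae_of_all _ heq),
    ← ofReal_integral_eq_lintegral_ofReal (integrableOn_gammaPDF_mul_pow ha hr n)
      ((ae_restrict_iff' measurableSet_Ioi).2 (ae_of_all _ (fun x hx =>
        mul_nonneg (gammaPDFReal_nonneg ha hr x) (pow_nonneg (le_of_lt hx) n)))),
    integral_gammaPDF_mul_pow ha hr n]

lemma integral_pow_gammaMeasure {a r : ℝ} (ha : 0 < a) (hr : 0 < r) (n : ℕ) :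
    ∫ x, x ^ n ∂(gammaMeasure a r)
      = (∏ k ∈ Finset.range n, (a + k)) / r ^ n := by
  rw [integral_eq_lintegral_of_nonneg_ae
    ((ae_nonneg_gammaMeasure a r).mono (fun x hx => pow_nonneg hx n))
    (by fun_prop : Measurable fun x : ℝ => x ^ n).aestronglyMeasurable,
    lintegral_pow_gammaMeasure ha hr n, ENNReal.toReal_ofReal]
  have hP : (0:ℝ) ≤ ∏ k ∈ Finset.range n, (a + k) :=
    Finset.prod_nonneg (fun k _ => by positivity)
  positivity

lemma risingFactorial_pos {a : ℝ} (ha : 0 < a) (n : ℕ) :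
    0 < ∏ k ∈ Finset.range n, (a + k) :=
  Finset.prod_pos (fun k _ => by positivity)

lemma min_le_risingFactorial {a : ℝ} (ha : 0 < a) (n : ℕ) :
    min a 1 ≤ ∏ k ∈ Finset.range n, (a + k) := by
  induction n with
  | zero => simpa using min_le_right a 1
  | succ n ih =>
    rw [Finset.prod_range_succ]
    rcases Nat.eq_zero_or_pos n with hn | hn
    · subst hn; simpa using min_le_left a 1
    · have h1 : (1:ℝ) ≤ a + n := by
        have : (1:ℝ) ≤ (n:ℝ) := by exact_mod_cast hn
        linarith
      nlinarith [risingFactorial_pos ha n, lt_min_iff.mpr ⟨ha, zero_lt_one⟩]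

lemma summable_hyp0F1 {a : ℝ} (ha : 0 < a) (b : ℝ) :
    Summable (fun n : ℕ => b ^ n / ((∏ k ∈ Finset.range n, (a + k)) * (Nat.factorial n))) := by
  have hm : (0:ℝ) < min a 1 := lt_min ha zero_lt_one
  refine Summable.of_norm_bounded (((Real.summable_pow_div_factorial |b|).mul_left (min a 1)⁻¹)) ?_
  intro n
  have hP := risingFactorial_pos ha n
  have hPm := min_le_risingFactorial ha n
  have hfac : (0:ℝ) < (Nat.factorial n : ℝ) := by positivity
  rw [norm_div, norm_pow, Real.norm_eq_abs, Real.norm_eq_abs]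
  rw [abs_of_pos (by positivity : (0:ℝ) < (∏ k ∈ Finset.range n, (a + k)) * (Nat.factorial n))]
  rw [div_le_iff₀ (by positivity)]
  have key : (min a 1)⁻¹ * (|b| ^ n / (Nat.factorial n)) * ((∏ k ∈ Finset.range n, (a + k)) * (Nat.factorial n))
      = |b| ^ n * ((min a 1)⁻¹ * (∏ k ∈ Finset.range n, (a + k))) := by
    field_simp
  rw [key]
  have h1 : (1:ℝ) ≤ (min a 1)⁻¹ * (∏ k ∈ Finset.range n, (a + k)) := by
    rw [← div_eq_inv_mul, le_div_iff₀ hm, one_mul]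
    exact hPm
  nlinarith [pow_nonneg (abs_nonneg b) n]

lemma measurable_hyp0F1 {a : ℝ} (ha : 0 < a) : Measurable (hyp0F1 a) := by
  have : ∀ b, Tendsto (fun N => ∑ n ∈ Finset.range N,
      b ^ n / ((∏ k ∈ Finset.range n, (a + k)) * (Nat.factorial n))) atTop (nhds (hyp0F1 a b)) :=
    fun b => (summable_hyp0F1 ha b).hasSum.tendsto_sum_nat
  refine measurable_of_tendsto_metrizable (f := fun N b => ∑ n ∈ Finset.range N,
      b ^ n / ((∏ k ∈ Finset.range n, (a + k)) * (Nat.factorial n))) (fun N => ?_) ?_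
  · exact Finset.measurable_sum _ (fun n _ => by fun_prop)
  · rw [tendsto_pi_nhds]; exact this

lemma integral_hyp0F1_gammaMeasure {a r c : ℝ} (ha : 0 < a) (hr : 0 < r) (hc : 0 ≤ c) :
    ∫ x, hyp0F1 a (-(c * x)) ∂(gammaMeasure a r) = Real.exp (-(c / r)) := by
  set P : ℕ → ℝ := fun n => ∏ k ∈ Finset.range n, (a + k) with hP
  set D : ℕ → ℝ := fun n => P n * (Nat.factorial n) with hD
  have hDpos : ∀ n, 0 < D n := fun n => by
    have := risingFactorial_pos ha n
    have : (0:ℝ) < (Nat.factorial n : ℝ) := by positivity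
    positivity
  set f : ℕ → ℝ → ℝ := fun n x => (-(c * x)) ^ n / D n with hf
  -- lintegral of the norm of each term
  have hterm : ∀ n, ∫⁻ x, ‖f n x‖₊ ∂(gammaMeasure a r)
      = ENNReal.ofReal ((c / r) ^ n / (Nat.factorial n)) := by
    intro n
    have hcongr : ∀ᵐ x ∂(gammaMeasure a r),
        (‖f n x‖₊ : ℝ≥0∞) = ENNReal.ofReal (c ^ n / D n) * ENNReal.ofReal (x ^ n) := by
      filter_upwards [ae_nonneg_gammaMeasure a r] with x hx
      rw [← enorm_eq_nnnorm, Real.enorm_eq_ofReal_abs, ← ENNReal.ofReal_mul (by positivity)]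
      congr 1
      rw [hf, abs_div, abs_of_pos (hDpos n), abs_pow, abs_neg, abs_of_nonneg (by positivity)]
      rw [mul_pow]
      ring
    rw [lintegral_congr_ae hcongr, lintegral_const_mul _ (by fun_prop),
      lintegral_pow_gammaMeasure ha hr n,
      ← ENNReal.ofReal_mul (by positivity)]
    congr 1
    have h1 : c ^ n / D n * (P n / r ^ n) = (c/r) ^ n / (Nat.factorial n) := by
      rw [hD, div_pow]
      field_simp
      exact mul_div_cancel_right₀ _ (show P n ≠ 0 from (risingFactorial_pos ha n).ne')
    exact h1
  -- the sum of the lintegrals is finite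
  have hsum : ∑' n, ∫⁻ x, ‖f n x‖₊ ∂(gammaMeasure a r) ≠ ⊤ := by
    simp_rw [hterm]
    rw [← ENNReal.ofReal_tsum_of_nonneg (fun n => by positivity)
      (Real.summable_pow_div_factorial (c/r))]
    exact ENNReal.ofReal_ne_top
  have hmeas : ∀ n, AEStronglyMeasurable (f n) (gammaMeasure a r) := fun n => by
    apply Measurable.aestronglyMeasurable; fun_prop
  have hswap : ∫ x, (∑' n, f n x) ∂(gammaMeasure a r) = ∑' n, ∫ x, f n x ∂(gammaMeasure a r) :=
    integral_tsum hmeas hsum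
  have hlhs : ∫ x, hyp0F1 a (-(c * x)) ∂(gammaMeasure a r)
      = ∫ x, (∑' n, f n x) ∂(gammaMeasure a r) := rfl
  rw [hlhs, hswap]
  have hint : ∀ n, ∫ x, f n x ∂(gammaMeasure a r) = (-(c/r)) ^ n / (Nat.factorial n) := by
    intro n
    have : ∀ x : ℝ, f n x = ((-c) ^ n / D n) * x ^ n := by
      intro x
      rw [hf]
      simp only []
      rw [show -(c * x) = (-c) * x by ring, mul_pow]
      ring
    simp_rw [this]
    rw [integral_const_mul, integral_pow_gammaMeasure ha hr n]
    have hPn := risingFactorial_pos ha n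
    have hfa : (0:ℝ) < (Nat.factorial n : ℝ) := by positivity
    simp only [hD, hP]
    rw [show -(c/r) = (-c)/r by ring, div_pow, div_div]
    rw [div_mul_div_comm]
    rw [div_eq_div_iff (by positivity) (by positivity)]
    ring
  simp_rw [hint]
  rw [Real.exp_eq_exp_ℝ, NormedSpace.exp_eq_tsum_div]

lemma gaussianPDFReal_mul_exp {τ : ℝ} {v : ℝ≥0} (hv : v ≠ 0) (x : ℝ) :
    gaussianPDFReal τ v x * Real.exp x
      = Real.exp (τ + v / 2) * gaussianPDFReal (τ + v) v x := by
  have hv' : (0:ℝ) < v := lt_of_le_of_ne (v.coe_nonneg) (by exact_mod_cast (Ne.symm hv))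
  simp only [gaussianPDFReal]
  rw [mul_assoc, ← Real.exp_add, mul_left_comm, ← Real.exp_add]
  congr 1
  field_simp
  ring

lemma integral_exp_gaussianReal (τ : ℝ) {v : ℝ≥0} (hv : v ≠ 0) :
    ∫ x, Real.exp x ∂(gaussianReal τ v) = Real.exp (τ + v / 2) := by
  rw [gaussianReal, if_neg hv,
    integral_eq_lintegral_of_nonneg_ae (ae_of_all _ (fun x => (Real.exp_pos x).le))
      Real.measurable_exp.aestronglyMeasurable,
    lintegral_withDensity_eq_lintegral_mul _
      (show Measurable (gaussianPDF τ v) from measurable_gaussianPDF τ v)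
      (by fun_prop : Measurable fun x : ℝ => ENNReal.ofReal (Real.exp x))]
  have heq : ∀ x : ℝ, (gaussianPDF τ v * fun x => ENNReal.ofReal (Real.exp x)) x
      = ENNReal.ofReal (Real.exp (τ + v / 2)) * gaussianPDF (τ + v) v x := by
    intro x
    simp only [Pi.mul_apply, gaussianPDF]
    rw [← ENNReal.ofReal_mul (gaussianPDFReal_nonneg τ v x),
      gaussianPDFReal_mul_exp hv x,
      ENNReal.ofReal_mul (Real.exp_pos _).le]
  rw [lintegral_congr heq, lintegral_const_mul _ (measurable_gaussianPDF _ v),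
    lintegral_gaussianPDF_eq_one (τ + v) hv, mul_one, ENNReal.toReal_ofReal (Real.exp_pos _).le]

/-- if `T ~ N(τ, σ²)` and `m S / σ² ~ χ²(m)` are independent, then
`E[exp(T) ₀F₁(m/2; -(m/2)(S/2))] = exp τ`. -/
theorem stmt_9 {Ω : Type*} [MeasurableSpace Ω] (μ : Measure Ω) [IsProbabilityMeasure μ]
    (m : ℕ) (hm : 0 < m) (τ : ℝ) (σ2 : ℝ) (hσ2 : 0 < σ2)
    (T S : Ω → ℝ) (hT : Measurable T) (hS : Measurable S)
    (hindep : IndepFun T S μ)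
    (hnormal : Measure.map T μ = gaussianReal τ σ2.toNNReal)
    (hchi : Measure.map (fun ω => (m : ℝ) * S ω / σ2) μ =
      gammaMeasure ((m : ℝ) / 2) (1 / 2)) :
    ∫ ω, Real.exp (T ω) *
        hyp0F1 ((m : ℝ) / 2) (-((m : ℝ) / 2) * (S ω / 2)) ∂μ = Real.exp τ := by

  set a : ℝ := (m : ℝ) / 2 with ha_def
  have ha : 0 < a := by positivity
  set v : ℝ≥0 := σ2.toNNReal with hv_def
  have hvr : (v : ℝ) = σ2 := Real.coe_toNNReal σ2 hσ2.le
  have hv : v ≠ 0 := by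
    intro h
    rw [h] at hvr
    simp at hvr
    linarith
  set φ : ℝ → ℝ := fun s => (m : ℝ) * s / σ2 with hφ_def
  have hφ : Measurable φ := by fun_prop
  set g : ℝ → ℝ := fun x => hyp0F1 a (-(σ2 / 4 * x)) with hg_def
  have hg : Measurable g := (measurable_hyp0F1 ha).comp (by fun_prop)
  -- rewrite the integrand
  have harg : ∀ ω, hyp0F1 a (-a * (S ω / 2)) = g (φ (S ω)) := by
    intro ω
    simp only [hg_def, hφ_def, ha_def]
    congr 1
    field_simp
    ring
  simp only [harg]
  -- independence of the composed random variables
  have hindep2 : IndepFun (fun ω => Real.exp (T ω)) (fun ω => g (φ (S ω))) μ :=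
    hindep.comp Real.measurable_exp (hg.comp hφ)
  rw [hindep2.integral_fun_mul_eq_mul_integral (Real.measurable_exp.comp hT).aestronglyMeasurable
    ((hg.comp (hφ.comp hS)).aestronglyMeasurable)]
  -- the Gaussian factor
  have h1 : ∫ ω, Real.exp (T ω) ∂μ = Real.exp (τ + σ2 / 2) := by
    rw [← integral_map hT.aemeasurable Real.measurable_exp.aestronglyMeasurable] at *
    rw [hnormal, integral_exp_gaussianReal τ hv, hvr]
  -- the gamma factor
  have h2 : ∫ ω, g (φ (S ω)) ∂μ = Real.exp (-(σ2 / 2)) := by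
    have hmap : Measure.map (fun ω => φ (S ω)) μ = gammaMeasure a (1 / 2) := hchi
    rw [← integral_map (φ := fun ω => φ (S ω)) (f := g) (by fun_prop : Measurable fun ω => φ (S ω)).aemeasurable hg.aestronglyMeasurable, hmap,
      hg_def]
    rw [integral_hyp0F1_gammaMeasure ha (by norm_num) (by positivity)]
    norm_num
    ring
  rw [h1, h2, ← Real.exp_add]
  ring_nf
end

section
/- Let G ≥ 1, let v ∈ ℝ^G have strictly positive entries, and let Σ̄ be a real G×G matrix. For each positive integer N define σ_N² = ln( (Σ_{i=1}^G Σ_{j=1}^G v_i v_j exp(Σ̄_{ij}/N)) / (Σ_{i=1}^G v_i)² ). Then the limit lim_{N→∞} N σ_N² exists and equals σ̄² = (vᵀ Σ̄ v) / (Σ_{i=1}^G v_i)². Moreover, if Σ̄ is symmetric positive definite, then 0 < σ̄² < ∞. -/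
open Real Finset Filter Matrix

/-- Theorem 2(b) of the paper: with `v` strictly positive and
`σ_N² = ln( Σ_{i,j} v_i v_j exp(Σ̄_{ij}/N) / (Σ_i v_i)² )`, the limit of `N σ_N²` exists and
equals `σ̄² = vᵀ Σ̄ v / (Σ_i v_i)²`; moreover `σ̄² > 0` when `Σ̄` is positive definite. -/
theorem stmt_12 (G : ℕ) (hG : 1 ≤ G) (v : Fin G → ℝ) (hv : ∀ g, 0 < v g)
    (Sbar : Matrix (Fin G) (Fin G) ℝ) :
    Filter.Tendsto
      (fun N : ℕ => (N : ℝ) *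
        Real.log ((∑ i, ∑ j, v i * v j * Real.exp (Sbar i j / N)) / (∑ i, v i) ^ 2))
      Filter.atTop (nhds ((v ⬝ᵥ Sbar *ᵥ v) / (∑ i, v i) ^ 2)) ∧
    (Sbar.PosDef → 0 < (v ⬝ᵥ Sbar *ᵥ v) / (∑ i, v i) ^ 2) := by
  have hne : Nonempty (Fin G) := ⟨⟨0, hG⟩⟩
  have hsum : 0 < ∑ i, v i := Finset.sum_pos (fun i _ => hv i) Finset.univ_nonempty
  set c : ℝ := (∑ i, v i) ^ 2 with hc
  have hcpos : 0 < c := by positivity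
  set F : ℝ → ℝ := fun t => ∑ i, ∑ j, v i * v j * Real.exp (Sbar i j * t) with hF
  have hF0 : F 0 = c := by
    simp only [hF, mul_zero, Real.exp_zero, mul_one, hc, sq]
    rw [Finset.sum_mul]
    exact Finset.sum_congr rfl fun i _ => by rw [Finset.mul_sum]
  have hdot : v ⬝ᵥ Sbar *ᵥ v = ∑ i, ∑ j, v i * v j * Sbar i j := by
    simp only [dotProduct, mulVec, Finset.mul_sum]
    exact Finset.sum_congr rfl fun i _ => Finset.sum_congr rfl fun j _ => by ring
  have hFd : HasDerivAt F (v ⬝ᵥ Sbar *ᵥ v) 0 := by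
    rw [hdot]
    apply HasDerivAt.fun_sum; intro i _
    apply HasDerivAt.fun_sum; intro j _
    have h1 : HasDerivAt (fun t : ℝ => Sbar i j * t) (Sbar i j * 1) 0 :=
      (hasDerivAt_id 0).const_mul (Sbar i j)
    have h2 := (h1.exp).const_mul (v i * v j)
    convert h2 using 1
    case e'_4 => rfl
    simp [Real.exp_zero]
  set g : ℝ → ℝ := fun t => Real.log (F t / c) with hg
  have hgd : HasDerivAt g ((v ⬝ᵥ Sbar *ᵥ v) / c) 0 := by
    have h3 : HasDerivAt (fun t => F t / c) ((v ⬝ᵥ Sbar *ᵥ v) / c) 0 := hFd.div_const c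
    have h4 := h3.log (by rw [hF0]; exact (div_pos hcpos hcpos).ne')
    convert h4 using 1
    rw [hF0, div_self hcpos.ne']
    simp
  have hslope := hasDerivAt_iff_tendsto_slope.mp hgd
  have hu : Tendsto (fun N : ℕ => (N : ℝ)⁻¹) atTop (nhdsWithin 0 {0}ᶜ) := by
    rw [tendsto_nhdsWithin_iff]
    constructor
    · exact tendsto_inv_atTop_zero.comp tendsto_natCast_atTop_atTop
    · filter_upwards [Filter.eventually_ge_atTop 1] with N hN
      have : (0:ℝ) < (N:ℝ) := by exact_mod_cast Nat.lt_of_lt_of_le Nat.zero_lt_one hN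
      exact (inv_ne_zero this.ne')
  refine ⟨?_, ?_⟩
  · have hcomp := hslope.comp hu
    refine hcomp.congr' ?_
    filter_upwards [Filter.eventually_ge_atTop 1] with N hN
    have hNpos : (0:ℝ) < (N:ℝ) := by exact_mod_cast Nat.lt_of_lt_of_le Nat.zero_lt_one hN
    have hg0 : g 0 = 0 := by rw [hg]; simp only [hF0, div_self hcpos.ne', Real.log_one]
    show slope g 0 ((N:ℝ)⁻¹) = _
    have hFeq : F (N:ℝ)⁻¹ = ∑ i, ∑ j, v i * v j * Real.exp (Sbar i j / N) := by
      simp only [hF]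
      exact Finset.sum_congr rfl fun i _ => Finset.sum_congr rfl fun j _ => by
        rw [div_eq_mul_inv]
    rw [slope_def_field, hg0, sub_zero, sub_zero]
    simp only [hg]
    rw [hFeq, div_eq_mul_inv, inv_inv, mul_comm]
  · intro hpd
    have hvne : v ≠ 0 := by
      intro h
      have := hv ⟨0, hG⟩
      rw [h] at this
      simp at this
    have := hpd.dotProduct_mulVec_pos hvne
    rw [star_trivial] at this
    exact div_pos this hcpos
end
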